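/- Let η > 0, let I be a finite nonempty index set, and let A_i ⊆ ℝ² (i ∈ I) be finite sets whose union is A = ⋃_{i∈I} A_i; assume moreover that A = ⋃_{i∈I} A_i^∁, where A_i^∁ := A \ A_i. For each i let 𝒞_i be the maximal optimal partition of (A_i^∁, η), and let 𝒞 be the maximal optimal partition of (A, η). Then any cluster C' ∈ 𝒞_i that has nonempty intersection with a cluster C ∈ 𝒞 satisfies C' ⊆ C; consequently, every cluster C ∈ 𝒞 is a union of clusters of the partitions 𝒞_i (i ∈ I). -/

import Mathlib

noncomputable section

/-- The Euclidean plane. -/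
abbrev Plane := EuclideanSpace ℝ (Fin 2)

/-- Perimeter of a bounded set via Cauchy's formula. -/
noncomputable def perim (C : Set Plane) : ℝ :=
  ∫ θ in (0:ℝ)..(2 * Real.pi),
    sSup ((fun p : Plane => p 0 * Real.cos θ + p 1 * Real.sin θ) '' C)

/-- `P` is a partition of `A` into nonempty clusters. -/
def IsPartition (A : Set Plane) (P : Finset (Set Plane)) : Prop :=
  (∀ C ∈ P, (C : Set Plane).Nonempty) ∧
  (⋃₀ (P : Set (Set Plane)) = A) ∧
  ((P : Set (Set Plane)).PairwiseDisjoint id)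

/-- Cost of a partition with opening cost `η` per cluster. -/
noncomputable def cost (η : ℝ) (P : Finset (Set Plane)) : ℝ :=
  η * P.card + ∑ C ∈ P, perim C

/-- `P` is an optimal partition for `(A, η)`. -/
def IsOptimalPartition (η : ℝ) (A : Set Plane) (P : Finset (Set Plane)) : Prop :=
  IsPartition A P ∧ ∀ Q : Finset (Set Plane), IsPartition A Q → cost η P ≤ cost η Q

/-- `A` is indivisible for `η`: the one-block partition `{A}` is optimal. -/
def Indivisible (η : ℝ) (A : Set Plane) : Prop :=
  IsOptimalPartition η A {A}

/-- A maximal optimal partition of `(A, η)`. -/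
def IsMaximalOptimal (η : ℝ) (A : Set Plane) (P : Finset (Set Plane)) : Prop :=
  IsOptimalPartition η A P ∧
  ¬ ∃ Q : Finset (Set Plane), IsOptimalPartition η A Q ∧ Q.card < P.card ∧
      ∀ C ∈ P, ∃ C' ∈ Q, C ⊆ C'

/-!
Suppose a cluster `C'` of an optimal partition of `B ⊆ A` met two or more clusters `𝒯` of the
maximal optimal partition of `A`. Merging `𝒯` into `⋃ 𝒯` strictly increases the cost (maximality),
and splitting `C'` into the pieces `C' ∩ X`, `X ∈ 𝒯`, does not decrease it (optimality). The opening
costs cancel when the two inequalities are added, leaving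
`h(⋃ 𝒯) + ∑ h(C' ∩ X) > h(C') + ∑ h(X)`. This fails already for the support functions in every
direction `θ`: the support function of `⋃ 𝒯` is that of a single `X⋆ ∈ 𝒯`, and that of `C' ∩ X` is
bounded by the one of `C'` for `X = X⋆` and by the one of `X` otherwise.
-/

def supportFun (C : Set Plane) (θ : ℝ) : ℝ :=
  sSup ((fun p : Plane => p 0 * Real.cos θ + p 1 * Real.sin θ) '' C)

lemma perim_eq_integral_supportFun (C : Set Plane) :
    perim C = ∫ θ in (0:ℝ)..(2 * Real.pi), supportFun C θ := rfl

lemma supportFun_mono {C D : Set Plane} (hD : D.Finite) (hC : C.Nonempty) (hCD : C ⊆ D)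
    (θ : ℝ) : supportFun C θ ≤ supportFun D θ :=
  csSup_le_csSup (hD.image _).bddAbove (hC.image _) (Set.image_mono hCD)

lemma continuous_supportFun {C : Set Plane} (hC : C.Finite) (hne : C.Nonempty) :
    Continuous (supportFun C) := by
  have hne' : hC.toFinset.Nonempty := hC.toFinset_nonempty.mpr hne
  have h : supportFun C = fun θ =>
      hC.toFinset.sup' hne' (fun p : Plane => p 0 * Real.cos θ + p 1 * Real.sin θ) := by
    ext θ
    rw [Finset.sup'_eq_csSup_image, hC.coe_toFinset]
    rfl
  rw [h]
  exact Continuous.finset_sup'_apply hne' fun p _ => by fun_prop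

lemma exists_supportFun_sUnion_le {S : Set (Set Plane)} (hfin : (⋃₀ S).Finite)
    (hne : (⋃₀ S).Nonempty) (θ : ℝ) : ∃ X ∈ S, supportFun (⋃₀ S) θ ≤ supportFun X θ := by
  obtain ⟨p, ⟨X, hXS, hpX⟩, hp⟩ := (hne.image _).csSup_mem (hfin.image
    (fun p : Plane => p 0 * Real.cos θ + p 1 * Real.sin θ))
  refine ⟨X, hXS, ?_⟩
  rw [supportFun, ← hp]
  exact le_csSup ((hfin.subset (Set.subset_sUnion_of_mem hXS)).image _).bddAbove
    (Set.mem_image_of_mem _ hpX)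

section Submodularity

variable {𝒯 : Finset (Set Plane)} {D : Set Plane}

lemma supportFun_sUnion_add_sum_inter_le (h𝒯 : 𝒯.Nonempty) (hfin : ∀ X ∈ 𝒯, X.Finite)
    (hD : D.Finite) (hDX : ∀ X ∈ 𝒯, (D ∩ X).Nonempty) (θ : ℝ) :
    supportFun (⋃₀ ↑𝒯) θ + ∑ X ∈ 𝒯, supportFun (D ∩ X) θ ≤
      supportFun D θ + ∑ X ∈ 𝒯, supportFun X θ := by
  obtain ⟨X₀, hX₀⟩ := h𝒯
  obtain ⟨X, hX, hUX⟩ := exists_supportFun_sUnion_le (𝒯.finite_toSet.sUnion hfin)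
    ((hDX X₀ hX₀).mono (Set.inter_subset_right.trans (Set.subset_sUnion_of_mem hX₀))) θ
  have hDX_le : supportFun (D ∩ X) θ ≤ supportFun D θ :=
    supportFun_mono hD (hDX X hX) Set.inter_subset_left θ
  have hrest : ∑ Y ∈ 𝒯.erase X, supportFun (D ∩ Y) θ ≤ ∑ Y ∈ 𝒯.erase X, supportFun Y θ :=
    Finset.sum_le_sum fun Y hY => supportFun_mono (hfin Y (Finset.mem_of_mem_erase hY))
      (hDX Y (Finset.mem_of_mem_erase hY)) Set.inter_subset_right θ
  rw [← Finset.add_sum_erase _ _ hX, ← Finset.add_sum_erase _ _ hX]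
  linarith

lemma perim_sUnion_add_sum_perim_inter_le (h𝒯 : 𝒯.Nonempty) (hfin : ∀ X ∈ 𝒯, X.Finite)
    (hD : D.Finite) (hDX : ∀ X ∈ 𝒯, (D ∩ X).Nonempty) :
    perim (⋃₀ ↑𝒯) + ∑ X ∈ 𝒯, perim (D ∩ X) ≤ perim D + ∑ X ∈ 𝒯, perim X := by
  have hX' : ∀ X ∈ 𝒯, Continuous (supportFun X) := fun X hX =>
    continuous_supportFun (hfin X hX) ((hDX X hX).mono Set.inter_subset_right)
  have hDX' : ∀ X ∈ 𝒯, Continuous (supportFun (D ∩ X)) := fun X hX =>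
    continuous_supportFun (hD.subset Set.inter_subset_left) (hDX X hX)
  obtain ⟨X₀, hX₀⟩ := h𝒯
  have hU : Continuous (supportFun (⋃₀ ↑𝒯)) :=
    continuous_supportFun (𝒯.finite_toSet.sUnion hfin)
      ((hDX X₀ hX₀).mono (Set.inter_subset_right.trans (Set.subset_sUnion_of_mem hX₀)))
  have hD' : Continuous (supportFun D) :=
    continuous_supportFun hD ((hDX X₀ hX₀).mono Set.inter_subset_left)
  simp only [perim_eq_integral_supportFun]
  rw [← intervalIntegral.integral_finsetSum fun X hX => (hDX' X hX).intervalIntegrable _ _,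
    ← intervalIntegral.integral_finsetSum fun X hX => (hX' X hX).intervalIntegrable _ _,
    ← intervalIntegral.integral_add (hU.intervalIntegrable _ _)
      ((continuous_finsetSum _ hDX').intervalIntegrable _ _),
    ← intervalIntegral.integral_add (hD'.intervalIntegrable _ _)
      ((continuous_finsetSum _ hX').intervalIntegrable _ _)]
  refine intervalIntegral.integral_mono_on (by positivity)
    ((hU.add (continuous_finsetSum _ hDX')).intervalIntegrable _ _)
    ((hD'.add (continuous_finsetSum _ hX')).intervalIntegrable _ _) fun θ _ => ?_
  exact supportFun_sUnion_add_sum_inter_le ⟨X₀, hX₀⟩ hfin hD hDX θ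

end Submodularity

section Partitions

variable {η : ℝ} {A B C D : Set Plane} {P Q S 𝒯 : Finset (Set Plane)}

lemma cost_union (h : Disjoint P Q) : cost η (P ∪ Q) = cost η P + cost η Q := by
  simp only [cost, Finset.card_union_of_disjoint h, Finset.sum_union h]
  push_cast
  ring

lemma cost_insert (h : C ∉ P) : cost η (insert C P) = η + perim C + cost η P := by
  simp only [cost, Finset.card_insert_of_notMem h, Finset.sum_insert h]
  push_cast
  ring

lemma cost_sdiff_add_cost (h : 𝒯 ⊆ P) : cost η (P \ 𝒯) + cost η 𝒯 = cost η P := by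
  rw [← cost_union Finset.sdiff_disjoint, Finset.sdiff_union_of_subset h]

namespace IsPartition

lemma subset_of_mem (hP : IsPartition A P) (hC : C ∈ P) : C ⊆ A :=
  hP.2.1 ▸ Set.subset_sUnion_of_mem hC

lemma exists_mem_of_mem (hP : IsPartition A P) {p : Plane} (hp : p ∈ A) : ∃ C ∈ P, p ∈ C := by
  rw [← hP.2.1] at hp
  simpa only [Set.mem_sUnion, Finset.mem_coe] using hp

lemma sUnion_notMem_sdiff (hP : IsPartition A P) (h𝒯P : 𝒯 ⊆ P) (h𝒯 : 𝒯.Nonempty) :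
    ⋃₀ ↑𝒯 ∉ P \ 𝒯 := by
  obtain ⟨X, hX⟩ := h𝒯
  intro hU
  rw [Finset.mem_sdiff] at hU
  have hXU : X ⊆ ⋃₀ ↑𝒯 := Set.subset_sUnion_of_mem hX
  have hdisj : Disjoint X (⋃₀ ↑𝒯) :=
    hP.2.2 (h𝒯P hX) hU.1 (by rintro rfl; exact hU.2 hX)
  exact (hP.1 X (h𝒯P hX)).ne_empty (hdisj.eq_bot_of_le hXU)

lemma merge (hP : IsPartition A P) (h𝒯P : 𝒯 ⊆ P) (h𝒯 : 𝒯.Nonempty) :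
    IsPartition A (insert (⋃₀ ↑𝒯) (P \ 𝒯)) := by
  obtain ⟨X, hX⟩ := h𝒯
  refine ⟨?_, ?_, ?_⟩
  · intro Y hY
    rcases Finset.mem_insert.mp hY with rfl | hY
    · exact (hP.1 X (h𝒯P hX)).mono (Set.subset_sUnion_of_mem hX)
    · exact hP.1 Y (Finset.mem_sdiff.mp hY).1
  · rw [Finset.coe_insert, Set.sUnion_insert, ← Set.sUnion_union, ← Finset.coe_union,
      Finset.union_sdiff_of_subset h𝒯P, hP.2.1]
  · rw [Finset.coe_insert]
    refine (hP.2.2.subset (by simp)).insert fun Y hY _ => ?_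
    rw [Finset.coe_sdiff, Set.mem_sdiff] at hY
    exact Set.disjoint_sUnion_left.mpr fun Z hZ =>
      hP.2.2 (h𝒯P hZ) hY.1 (by rintro rfl; exact hY.2 hZ)

lemma disjoint_erase (hP : IsPartition B P) (hC : C ∈ P) (hS : IsPartition C S) :
    Disjoint (P.erase C) S := by
  refine Finset.disjoint_left.mpr fun Z hZP hZS => ?_
  have hdisj : Disjoint Z C :=
    hP.2.2 (Finset.mem_of_mem_erase hZP) hC (Finset.ne_of_mem_erase hZP)
  exact (hS.1 Z hZS).ne_empty (hdisj.eq_bot_of_le (hS.subset_of_mem hZS))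

lemma split (hP : IsPartition B P) (hC : C ∈ P) (hS : IsPartition C S) :
    IsPartition B (P.erase C ∪ S) := by
  refine ⟨?_, ?_, ?_⟩
  · intro Z hZ
    rcases Finset.mem_union.mp hZ with hZ | hZ
    · exact hP.1 Z (Finset.mem_of_mem_erase hZ)
    · exact hS.1 Z hZ
  · rw [Finset.coe_union, Set.sUnion_union, hS.2.1, Set.union_comm, ← Set.sUnion_insert,
      ← Finset.coe_insert, Finset.insert_erase hC, hP.2.1]
  · rw [Finset.coe_union, Set.pairwiseDisjoint_union]
    refine ⟨hP.2.2.subset (Finset.coe_subset.mpr (Finset.erase_subset _ _)), hS.2.2,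
      fun Z hZ W hW _ => ?_⟩
    exact (hP.2.2 (Finset.mem_of_mem_erase hZ) hC (Finset.ne_of_mem_erase hZ)).mono_right
      (hS.subset_of_mem hW)

open scoped Classical in
lemma injOn_inter (hP : IsPartition A P) :
    Set.InjOn (D ∩ ·) ↑(P.filter fun X => (D ∩ X).Nonempty) := by
  intro X hX Y hY hXY
  simp only [Finset.coe_filter, Set.mem_ofPred_eq] at hX hY
  obtain ⟨p, hpD, hpX⟩ := hX.2
  have hpY : p ∈ D ∩ Y := (show D ∩ X = D ∩ Y from hXY) ▸ ⟨hpD, hpX⟩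
  exact hP.2.2.elim_set hX.1 hY.1 p hpX hpY.2

open scoped Classical in
lemma inter (hP : IsPartition A P) (hDA : D ⊆ A) :
    IsPartition D ((P.filter fun X => (D ∩ X).Nonempty).image (D ∩ ·)) := by
  refine ⟨?_, ?_, ?_⟩
  · intro Z hZ
    obtain ⟨X, hX, rfl⟩ := Finset.mem_image.mp hZ
    exact (Finset.mem_filter.mp hX).2
  · refine Set.Subset.antisymm (Set.sUnion_subset fun Z hZ => ?_) fun p hpD => ?_
    · obtain ⟨X, -, rfl⟩ := Finset.mem_image.mp hZ
      exact Set.inter_subset_left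
    · obtain ⟨X, hX, hpX⟩ := hP.exists_mem_of_mem (hDA hpD)
      exact ⟨D ∩ X, Finset.mem_image_of_mem _ (Finset.mem_filter.mpr ⟨hX, p, hpD, hpX⟩),
        hpD, hpX⟩
  · rw [Finset.coe_image]
    exact (hP.2.2.subset (Finset.coe_subset.mpr (Finset.filter_subset _ _))).image_of_le
      fun _ => Set.inter_subset_right

open scoped Classical in
lemma cost_inter (hP : IsPartition A P) :
    cost η ((P.filter fun X => (D ∩ X).Nonempty).image (D ∩ ·)) =
      η * (P.filter fun X => (D ∩ X).Nonempty).card +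
        ∑ X ∈ P.filter fun X => (D ∩ X).Nonempty, perim (D ∩ X) := by
  rw [cost, Finset.card_image_of_injOn hP.injOn_inter, Finset.sum_image hP.injOn_inter]

end IsPartition

lemma IsMaximalOptimal.cost_lt_of_coarser (hP : IsMaximalOptimal η A P)
    (hQ : IsPartition A Q) (hcard : Q.card < P.card) (hcoarse : ∀ C ∈ P, ∃ C' ∈ Q, C ⊆ C') :
    cost η P < cost η Q :=
  (hP.1.2 Q hQ).lt_of_ne fun h => hP.2 ⟨Q, ⟨hQ, fun R hR => h ▸ hP.1.2 R hR⟩, hcard, hcoarse⟩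

lemma IsMaximalOptimal.cost_lt_merge (hP : IsMaximalOptimal η A P) (h𝒯P : 𝒯 ⊆ P)
    (h𝒯 : 1 < 𝒯.card) : cost η 𝒯 < η + perim (⋃₀ ↑𝒯) := by
  have h𝒯ne : 𝒯.Nonempty := Finset.card_pos.mp (by omega)
  have hU := hP.1.1.sUnion_notMem_sdiff h𝒯P h𝒯ne
  have hcard : (insert (⋃₀ ↑𝒯) (P \ 𝒯)).card < P.card := by
    rw [Finset.card_insert_of_notMem hU, Finset.card_sdiff_of_subset h𝒯P]
    have := Finset.card_le_card h𝒯P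
    omega
  have hcoarse : ∀ X ∈ P, ∃ Y ∈ insert (⋃₀ ↑𝒯) (P \ 𝒯), X ⊆ Y := by
    intro X hX
    by_cases hX𝒯 : X ∈ 𝒯
    · exact ⟨_, Finset.mem_insert_self _ _, Set.subset_sUnion_of_mem hX𝒯⟩
    · exact ⟨X, Finset.mem_insert_of_mem (Finset.mem_sdiff.mpr ⟨hX, hX𝒯⟩), subset_rfl⟩
  have hlt := hP.cost_lt_of_coarser (hP.1.1.merge h𝒯P h𝒯ne) hcard hcoarse
  rw [cost_insert hU, ← cost_sdiff_add_cost h𝒯P] at hlt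
  linarith

lemma IsOptimalPartition.cost_le_of_isPartition (hP : IsOptimalPartition η B P) (hC : C ∈ P)
    (hS : IsPartition C S) : η + perim C ≤ cost η S := by
  have hle := hP.2 _ (hP.1.split hC hS)
  rw [cost_union (hP.1.disjoint_erase hC hS)] at hle
  have hP_eq : cost η P = η + perim C + cost η (P.erase C) := by
    rw [← cost_insert (Finset.notMem_erase C P), Finset.insert_erase hC]
  linarith

end Partitions

open scoped Classical in
theorem IsOptimalPartition.subset_of_inter_nonempty {η : ℝ} {A B C C' : Set Plane}
    {𝒟 𝒞 : Finset (Set Plane)} (hA : A.Finite) (hBA : B ⊆ A) (h𝒟 : IsOptimalPartition η B 𝒟)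
    (h𝒞 : IsMaximalOptimal η A 𝒞) (hC' : C' ∈ 𝒟) (hC : C ∈ 𝒞) (hC'C : (C' ∩ C).Nonempty) :
    C' ⊆ C := by
  by_contra hsub
  have hC'A : C' ⊆ A := (h𝒟.1.subset_of_mem hC').trans hBA
  obtain ⟨y, hyC', hyC⟩ := Set.not_subset.mp hsub
  obtain ⟨C₂, hC₂, hyC₂⟩ := h𝒞.1.1.exists_mem_of_mem (hC'A hyC')
  set 𝒯 := 𝒞.filter fun X => (C' ∩ X).Nonempty
  have h𝒯 : 1 < 𝒯.card := Finset.one_lt_card.mpr ⟨C, Finset.mem_filter.mpr ⟨hC, hC'C⟩,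
    C₂, Finset.mem_filter.mpr ⟨hC₂, y, hyC', hyC₂⟩, by rintro rfl; exact hyC hyC₂⟩
  have hmerge := h𝒞.cost_lt_merge (Finset.filter_subset _ _) h𝒯
  have hsplit := h𝒟.cost_le_of_isPartition hC' (h𝒞.1.1.inter hC'A)
  have hperim := perim_sUnion_add_sum_perim_inter_le (Finset.card_pos.mp (by omega : 0 < 𝒯.card))
    (fun X hX => hA.subset (h𝒞.1.1.subset_of_mem (Finset.mem_filter.mp hX).1))
    (hA.subset hC'A) (fun X hX => (Finset.mem_filter.mp hX).2)
  rw [h𝒞.1.1.cost_inter] at hsplit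
  rw [cost] at hmerge
  linarith

theorem big_cluster_property_containment_general
    (η : ℝ)
    (ι : Type) [Fintype ι]
    (A : ι → Set Plane) (hfin : ∀ i, (A i).Finite)
    (Atot : Set Plane) (hAtot : Atot = ⋃ i, A i)
    (hcompl : Atot = ⋃ i, Atot \ A i)
    (𝒞 : ι → Finset (Set Plane))
    (h𝒞 : ∀ i, IsMaximalOptimal η (Atot \ A i) (𝒞 i))
    (𝒞tot : Finset (Set Plane)) (h𝒞tot : IsMaximalOptimal η Atot 𝒞tot) :
    (∀ i : ι, ∀ C' ∈ 𝒞 i, ∀ C ∈ 𝒞tot, (C' ∩ C).Nonempty → C' ⊆ C) ∧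
    (∀ C ∈ 𝒞tot, C = ⋃₀ {C' : Set Plane | (∃ i : ι, C' ∈ 𝒞 i) ∧ C' ⊆ C}) := by
  have hAfin : Atot.Finite := hAtot ▸ Set.finite_iUnion hfin
  have hcontain : ∀ i, ∀ C' ∈ 𝒞 i, ∀ C ∈ 𝒞tot, (C' ∩ C).Nonempty → C' ⊆ C :=
    fun i _ hC' _ hC => (h𝒞 i).1.subset_of_inter_nonempty hAfin Set.sdiff_subset h𝒞tot hC' hC
  refine ⟨hcontain, fun C hC => Set.Subset.antisymm (fun p hpC => ?_)
    (Set.sUnion_subset fun _ hC' => hC'.2)⟩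
  obtain ⟨i, hpi⟩ := Set.mem_iUnion.mp (hcompl ▸ h𝒞tot.1.1.subset_of_mem hC hpC)
  obtain ⟨C', hC', hpC'⟩ := (h𝒞 i).1.1.exists_mem_of_mem hpi
  exact ⟨C', ⟨⟨i, hC'⟩, hcontain i C' hC' C hC ⟨p, hpC', hpC⟩⟩, hpC'⟩

/-- first part of Lemma 5: with `A = ⋃ᵢ Aᵢ = ⋃ᵢ (A \ Aᵢ)`,
any cluster of the maximal optimal partition of `A \ Aᵢ` intersecting a cluster
of the maximal optimal partition of `A` is contained in it; consequently every
cluster of the latter is the union of the clusters of the former contained in it. -/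
theorem big_cluster_property_containment
    (η : ℝ) (hη : 0 < η)
    (ι : Type) [Fintype ι] [Nonempty ι]
    (A : ι → Set Plane) (hfin : ∀ i, (A i).Finite)
    (Atot : Set Plane) (hAtot : Atot = ⋃ i, A i)
    (hcompl : Atot = ⋃ i, Atot \ A i)
    (𝒞 : ι → Finset (Set Plane))
    (h𝒞 : ∀ i, IsMaximalOptimal η (Atot \ A i) (𝒞 i))
    (𝒞tot : Finset (Set Plane)) (h𝒞tot : IsMaximalOptimal η Atot 𝒞tot) :
    (∀ i : ι, ∀ C' ∈ 𝒞 i, ∀ C ∈ 𝒞tot, (C' ∩ C).Nonempty → C' ⊆ C) ∧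
    (∀ C ∈ 𝒞tot, C = ⋃₀ {C' : Set Plane | (∃ i : ι, C' ∈ 𝒞 i) ∧ C' ⊆ C}) :=
  big_cluster_property_containment_general η ι A hfin Atot hAtot hcompl 𝒞 h𝒞 𝒞tot h𝒞tot

end
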